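/- For every integer n ≥ 4, the tree-depth of K_{n−1} □ K_2 is at least n+1; consequently, the star-clique transform of H_n at v does not have smaller tree-depth than H_n. -/
import Mathlib
open SimpleGraph Finset


/-- A `k`-ranking of a graph `G`: a labeling of the vertices with labels from `{1,…,k}` such
that every path joining two distinct vertices with the same label has an internal vertex with
a strictly larger label. -/
def IsRanking {V : Type*} (G : SimpleGraph V) (k : ℕ) (f : V → ℕ) : Prop :=
  (∀ v, 1 ≤ f v ∧ f v ≤ k) ∧
  ∀ ⦃u w : V⦄ (p : G.Walk u w), p.IsPath → u ≠ w → f u = f w →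
    ∃ x ∈ p.support, x ≠ u ∧ x ≠ w ∧ f u < f x

/-- The tree-depth of `G`: the least `k` for which `G` admits a `k`-ranking. -/
noncomputable def treedepth {V : Type*} (G : SimpleGraph V) : ℕ :=
  sInf {k | ∃ f, IsRanking G k f}

/-- The star-clique transform of `G` at `v`: delete `v`, and join two remaining vertices iff
they were adjacent in `G` or both were neighbors of `v`. -/
def starClique {V : Type*} (G : SimpleGraph V) (v : V) : SimpleGraph {x : V // x ≠ v} :=
  SimpleGraph.fromRel (fun x y => G.Adj x y ∨ (G.Adj v x ∧ G.Adj v y))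

/-- The graph `H_n`, obtained from `K_n` by subdividing once every edge incident to a fixed
vertex `v`.  Here `none` is `v`, `some (Sum.inl i)` is the degree-2 subdivision vertex
`a_{i+1}`, and `some (Sum.inr i)` is the vertex `b_{i+1}` of the clique on `B_n`. -/
def Hgraph (n : ℕ) : SimpleGraph (Option (Fin (n - 1) ⊕ Fin (n - 1))) :=
  SimpleGraph.fromRel (fun x y =>
    (∃ i : Fin (n - 1), x = none ∧ y = some (Sum.inl i)) ∨
    (∃ i : Fin (n - 1), x = some (Sum.inl i) ∧ y = some (Sum.inr i)) ∨
    (∃ i j : Fin (n - 1), x = some (Sum.inr i) ∧ y = some (Sum.inr j)))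

/-- The Cartesian (box) product `K_a □ K_2`. -/
def KaK2 (a : ℕ) : SimpleGraph (Fin a × Fin 2) :=
  SimpleGraph.boxProd ⊤ ⊤

lemma rank_adj {V : Type*} {G : SimpleGraph V} {k : ℕ} {f : V → ℕ} (hf : IsRanking G k f)
    {u w : V} (h : G.Adj u w) : f u ≠ f w := by
  intro he
  obtain ⟨x, hx, hxu, hxw, _⟩ := hf.2 (Walk.cons h Walk.nil) (by simp [h.ne]) h.ne he
  simp [Walk.support_cons] at hx
  rcases hx with rfl | rfl <;> simp_all

lemma rank_mid {V : Type*} {G : SimpleGraph V} {k : ℕ} {f : V → ℕ} (hf : IsRanking G k f)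
    {u v w : V} (h1 : G.Adj u v) (h2 : G.Adj v w) (huw : u ≠ w) (he : f u = f w) :
    f u < f v := by
  obtain ⟨x, hx, hxu, hxw, hlt⟩ := hf.2 (Walk.cons h1 (Walk.cons h2 Walk.nil))
    (by simp [h1.ne, h2.ne, huw]) huw he
  simp [Walk.support_cons] at hx
  rcases hx with rfl | rfl | rfl <;> simp_all

lemma ranking_comp {V W : Type*} {G : SimpleGraph V} {G' : SimpleGraph W} (φ : G →g G')
    (hφ : Function.Injective φ) {k : ℕ} {f : W → ℕ} (hf : IsRanking G' k f) :
    IsRanking G k (f ∘ φ) := by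
  refine ⟨fun v => hf.1 _, fun u w p hp huw he => ?_⟩
  obtain ⟨x, hx, hxu, hxw, hlt⟩ := hf.2 (p.map φ) (Walk.map_isPath_of_injective hφ hp)
    (fun h => huw (hφ h)) he
  rw [Walk.support_map, List.mem_map] at hx
  obtain ⟨y, hy, rfl⟩ := hx
  exact ⟨y, hy, fun h => hxu (by rw [h]), fun h => hxw (by rw [h]), hlt⟩

lemma exists_ranking {V : Type*} [Fintype V] [DecidableEq V] (G : SimpleGraph V) :
    ∃ f, IsRanking G (Fintype.card V) f := by
  obtain ⟨e⟩ := Fintype.truncEquivFin V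
  refine ⟨fun v => (e v : ℕ) + 1, fun v => ⟨le_add_self, Nat.succ_le_of_lt (e v).isLt⟩,
    fun u w p hp huw he => ?_⟩
  simp only at he
  exact absurd (e.injective (Fin.val_injective (by omega))) huw

lemma kak2_adj {a : ℕ} {u w : Fin a} {i j : Fin 2} :
    (KaK2 a).Adj (u, i) (w, j) ↔ (u ≠ w ∧ i = j) ∨ (i ≠ j ∧ u = w) := by
  simp [KaK2, SimpleGraph.boxProd_adj]

lemma kak2_rank_lower {a k : ℕ} (ha : 3 ≤ a) {f : Fin a × Fin 2 → ℕ}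
    (hf : IsRanking (KaK2 a) k f) : a + 2 ≤ k := by
  by_contra hk
  push_neg at hk
  have hk' : k ≤ a + 1 := by omega
  have h0 : 0 < a := by omega
  -- adjacency helpers
  have adjS : ∀ (j : Fin 2) {u w : Fin a}, u ≠ w → (KaK2 a).Adj (u, j) (w, j) :=
    fun j _ _ h => kak2_adj.mpr (Or.inl ⟨h, rfl⟩)
  have adjC : ∀ {i j : Fin 2} (u : Fin a), i ≠ j → (KaK2 a).Adj (u, i) (u, j) :=
    fun u h => kak2_adj.mpr (Or.inr ⟨h, rfl⟩)
  -- injectivity within a side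
  have inj : ∀ (j : Fin 2), Function.Injective (fun u : Fin a => f (u, j)) := by
    intro j u w h
    by_contra hne
    exact rank_adj hf (adjS j hne) h
  set F : Fin 2 → Finset ℕ := fun j => Finset.image (fun u => f (u, j)) Finset.univ with hF
  have hcard : ∀ j, (F j).card = a := by
    intro j
    rw [hF]
    rw [Finset.card_image_of_injective _ (inj j), Finset.card_univ, Fintype.card_fin]
  have hsub : ∀ j, F j ⊆ Finset.Icc 1 (a + 1) := by
    intro j x hx
    simp only [hF, Finset.mem_image] at hx
    obtain ⟨u, _, rfl⟩ := hx
    have := hf.1 (u, j)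
    simp [Finset.mem_Icc]
    omega
  have hFne : ∀ j, (F j).Nonempty := by
    intro j
    exact ⟨f (⟨0, h0⟩, j), Finset.mem_image.mpr ⟨⟨0, h0⟩, Finset.mem_univ _, rfl⟩⟩
  -- the global max
  set M : ℕ := ((F 0) ∪ (F 1)).max' ((hFne 0).mono Finset.subset_union_left) with hM
  have hMmem : M ∈ F 0 ∪ F 1 := Finset.max'_mem _ _
  have hunion : ∀ (j : Fin 2) (x : ℕ), x ∈ F j → x ∈ F 0 ∪ F 1 := by
    intro j
    fin_cases j
    · exact fun x h => Finset.mem_union_left _ h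
    · exact fun x h => Finset.mem_union_right _ h
  have hle : ∀ (u : Fin a) (j : Fin 2), f (u, j) ≤ M := by
    intro u j
    exact Finset.le_max' _ _ (hunion j _ (Finset.mem_image.mpr ⟨u, Finset.mem_univ _, rfl⟩))
  clear_value M
  have hsides : ∀ j0 : Fin 2, ∀ j : Fin 2, j = j0 ∨ j = j0 + 1 := by decide
  have hneq : ∀ j0 : Fin 2, j0 ≠ j0 + 1 := by decide
  have key : ∀ j0 : Fin 2, M ∈ F j0 → False := by
    intro j0 hMj0
    set j1 : Fin 2 := j0 + 1 with hj1
    have hne01 : j0 ≠ j1 := hneq j0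
    obtain ⟨u0, -, hu0⟩ := Finset.mem_image.mp hMj0
    -- M not in F j1
    have hMnot : M ∉ F j1 := by
      intro hMj1
      obtain ⟨w, -, hw⟩ := Finset.mem_image.mp hMj1
      by_cases huw : u0 = w
      · exact rank_adj hf (adjC u0 hne01) (by subst huw; rw [hu0, hw])
      · have := rank_mid hf (adjC u0 hne01) (adjS j1 huw)
          (by simp [hne01, Prod.ext_iff]) (by rw [hu0, hw])
        have h2 := hle u0 j1
        omega
    -- F j1 = Icc \ {M}
    have hMIcc : M ∈ Finset.Icc 1 (a + 1) := hsub j0 hMj0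
    have hIcard : (Finset.Icc 1 (a + 1)).card = a + 1 := by
      rw [Nat.card_Icc]; omega
    have hFj1 : F j1 = Finset.Icc 1 (a + 1) \ {M} := by
      apply Finset.eq_of_subset_of_card_le
      · intro x hx
        rw [Finset.mem_sdiff, Finset.mem_singleton]
        exact ⟨hsub j1 hx, fun h => hMnot (h ▸ hx)⟩
      · rw [Finset.card_sdiff_of_subset (by simpa using hMIcc), hIcard, Finset.card_singleton,
          hcard j1]
        omega
    -- second max
    set M2 : ℕ := (F j1).max' (hFne j1) with hM2
    have hM2mem : M2 ∈ F j1 := Finset.max'_mem _ _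
    obtain ⟨w1, -, hw1⟩ := Finset.mem_image.mp hM2mem
    have hM2M : M2 ≠ M := fun h => hMnot (h ▸ hM2mem)
    have hM2le : M2 ≤ M := by
      rw [hM]; exact Finset.le_max' _ _ (hunion j1 _ hM2mem)
    have hleM2 : ∀ u : Fin a, f (u, j1) ≤ M2 :=
      fun u => Finset.le_max' (F j1) _ (Finset.mem_image.mpr ⟨u, Finset.mem_univ _, rfl⟩)
    clear_value M2
    -- M2 not in F j0
    have hM2not : M2 ∉ F j0 := by
      intro hM2j0
      obtain ⟨w, -, hw⟩ := Finset.mem_image.mp hM2j0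
      by_cases hww : w1 = w
      · exact rank_adj hf (adjC w1 hne01.symm) (by subst hww; rw [hw1, hw])
      · have := rank_mid hf (adjS j1 hww) (adjC w hne01.symm)
          (by simp [hne01.symm, Prod.ext_iff]) (by rw [hw1, hw])
        have h2 := hleM2 w
        omega
    have hM2Icc : M2 ∈ Finset.Icc 1 (a + 1) := hsub j1 hM2mem
    have hFj0 : F j0 = Finset.Icc 1 (a + 1) \ {M2} := by
      apply Finset.eq_of_subset_of_card_le
      · intro x hx
        rw [Finset.mem_sdiff, Finset.mem_singleton]
        exact ⟨hsub j0 hx, fun h => hM2not (h ▸ hx)⟩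
      · rw [Finset.card_sdiff_of_subset (by simpa using hM2Icc), hIcard, Finset.card_singleton,
          hcard j0]
        omega
    -- the common-label set
    set C : Finset ℕ := Finset.Icc 1 (a + 1) \ {M, M2} with hC
    have hCcard : C.card = a - 1 := by
      rw [hC, Finset.card_sdiff_of_subset, hIcard, Finset.card_pair hM2M.symm]
      · omega
      · intro x hx
        simp only [Finset.mem_insert, Finset.mem_singleton] at hx
        rcases hx with rfl | rfl
        · exact hMIcc
        · exact hM2Icc
    have hCne : C.Nonempty := Finset.card_pos.mp (by omega)
    set M3 : ℕ := C.max' hCne with hM3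
    have hM3mem : M3 ∈ C := Finset.max'_mem _ _
    have hmaxC : ∀ x ∈ C, x ≤ M3 := fun x hx => Finset.le_max' C x hx
    clear_value M3
    have hC'ne : (C.erase M3).Nonempty := by
      apply Finset.card_pos.mp
      rw [Finset.card_erase_of_mem hM3mem]
      omega
    set M4 : ℕ := (C.erase M3).max' hC'ne with hM4
    have hM4mem' : M4 ∈ C.erase M3 := Finset.max'_mem _ _
    have hM4mem : M4 ∈ C := Finset.mem_of_mem_erase hM4mem'
    have hmaxC' : ∀ x ∈ C.erase M3, x ≤ M4 := fun x hx => Finset.le_max' (C.erase M3) x hx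
    clear_value M4
    have hM4lt : M4 < M3 :=
      lt_of_le_of_ne (hmaxC _ hM4mem) (Finset.ne_of_mem_erase hM4mem')
    -- label values above M3 / M4
    have hval : ∀ (u : Fin a) (j : Fin 2), f (u, j) ∈ Finset.Icc 1 (a + 1) := by
      intro u j
      have := hf.1 (u, j)
      simp [Finset.mem_Icc]; omega
    have hgt3 : ∀ (u : Fin a) (j : Fin 2), M3 < f (u, j) → f (u, j) = M ∨ f (u, j) = M2 := by
      intro u j h
      by_contra hcon
      push_neg at hcon
      have : f (u, j) ∈ C := by
        rw [hC, Finset.mem_sdiff]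
        simp only [Finset.mem_insert, Finset.mem_singleton]
        exact ⟨hval u j, by tauto⟩
      have := hmaxC _ this
      omega
    have hgt4 : ∀ (u : Fin a) (j : Fin 2), M4 < f (u, j) →
        f (u, j) = M ∨ f (u, j) = M2 ∨ f (u, j) = M3 := by
      intro u j h
      by_contra hcon
      push_neg at hcon
      have hmem : f (u, j) ∈ C.erase M3 := by
        rw [Finset.mem_erase, hC, Finset.mem_sdiff]
        simp only [Finset.mem_insert, Finset.mem_singleton]
        exact ⟨hcon.2.2, hval u j, by tauto⟩
      have := hmaxC' _ hmem
      omega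
    -- M3 and M4 are in both sides
    have hCj0 : C ⊆ F j0 := by
      rw [hFj0, hC]
      intro x hx
      rw [Finset.mem_sdiff] at hx ⊢
      simp only [Finset.mem_insert, Finset.mem_singleton] at hx
      rw [Finset.mem_singleton]
      exact ⟨hx.1, fun h => hx.2 (Or.inr h)⟩
    have hCj1 : C ⊆ F j1 := by
      rw [hFj1, hC]
      intro x hx
      rw [Finset.mem_sdiff] at hx ⊢
      simp only [Finset.mem_insert, Finset.mem_singleton] at hx
      rw [Finset.mem_singleton]
      exact ⟨hx.1, fun h => hx.2 (Or.inl h)⟩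
    have hM3ne : M3 ≠ M ∧ M3 ≠ M2 := by
      have := hM3mem
      rw [hC, Finset.mem_sdiff] at this
      simp only [Finset.mem_insert, Finset.mem_singleton] at this
      tauto
    have hM4ne : M4 ≠ M ∧ M4 ≠ M2 := by
      have := hM4mem
      rw [hC, Finset.mem_sdiff] at this
      simp only [Finset.mem_insert, Finset.mem_singleton] at this
      tauto
    -- witnesses
    obtain ⟨u3, -, hu3⟩ := Finset.mem_image.mp (hCj0 hM3mem)
    obtain ⟨w3, -, hw3⟩ := Finset.mem_image.mp (hCj1 hM3mem)
    obtain ⟨u4, -, hu4⟩ := Finset.mem_image.mp (hCj0 hM4mem)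
    obtain ⟨w4, -, hw4⟩ := Finset.mem_image.mp (hCj1 hM4mem)
    have hu3w3 : u3 ≠ w3 := by
      intro h
      exact rank_adj hf (adjC u3 hne01) (by rw [hu3]; rw [h, hw3])
    -- f (u3, j1) = M2 and f (w3, j0) = M
    have h31 : f (u3, j1) = M2 := by
      have hlt := rank_mid hf (adjC u3 hne01) (adjS j1 hu3w3)
        (by simp [hne01, Prod.ext_iff]) (by rw [hu3, hw3])
      rw [hu3] at hlt
      rcases hgt3 u3 j1 hlt with h | h
      · exfalso
        have : f (u3, j1) ∈ F j1 := Finset.mem_image.mpr ⟨u3, Finset.mem_univ _, rfl⟩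
        rw [hFj1, Finset.mem_sdiff, Finset.mem_singleton] at this
        exact this.2 h
      · exact h
    have h30 : f (w3, j0) = M := by
      have hlt := rank_mid hf (adjS j0 hu3w3) (adjC w3 hne01)
        (by simp [hne01, Prod.ext_iff]) (by rw [hu3, hw3])
      rw [hu3] at hlt
      rcases hgt3 w3 j0 hlt with h | h
      · exact h
      · exfalso
        have : f (w3, j0) ∈ F j0 := Finset.mem_image.mpr ⟨w3, Finset.mem_univ _, rfl⟩
        rw [hFj0, Finset.mem_sdiff, Finset.mem_singleton] at this
        exact this.2 h
    -- now for M4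
    have hu4w4 : u4 ≠ w4 := by
      intro h
      exact rank_adj hf (adjC u4 hne01) (by rw [hu4]; rw [h, hw4])
    have h41 : f (u4, j1) = M2 ∨ f (u4, j1) = M3 := by
      have hlt := rank_mid hf (adjC u4 hne01) (adjS j1 hu4w4)
        (by simp [hne01, Prod.ext_iff]) (by rw [hu4, hw4])
      rw [hu4] at hlt
      have hnotM : f (u4, j1) ≠ M := by
        intro h
        have : f (u4, j1) ∈ F j1 := Finset.mem_image.mpr ⟨u4, Finset.mem_univ _, rfl⟩
        rw [hFj1, Finset.mem_sdiff, Finset.mem_singleton] at this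
        exact this.2 h
      rcases hgt4 u4 j1 hlt with h | h | h <;> tauto
    rcases h41 with h | h
    · -- u4 = u3, contradiction M4 = M3
      have : u4 = u3 := inj j1 (show f (u4, j1) = f (u3, j1) by rw [h, h31])
      rw [this, hu3] at hu4
      omega
    · -- u4 = w3, then f (u4, j0) = M, contradiction
      have : u4 = w3 := inj j1 (show f (u4, j1) = f (w3, j1) by rw [h, hw3])
      rw [this, h30] at hu4
      have : M3 ≤ M := by
        have := hCj1 hM3mem
        obtain ⟨z, -, hz⟩ := Finset.mem_image.mp this
        rw [← hz]
        exact hle z j1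
      omega
  rcases Finset.mem_union.mp hMmem with h | h
  · exact key 0 h
  · exact key 1 h

def hRank (n : ℕ) : Option (Fin (n - 1) ⊕ Fin (n - 1)) → ℕ
  | none => 2
  | some (Sum.inl _) => 1
  | some (Sum.inr i) => (i : ℕ) + 3

lemma hRank_ranking (n : ℕ) (hn : 4 ≤ n) : IsRanking (Hgraph n) (n + 1) (hRank n) := by
  constructor
  · rintro (_ | i | i) <;> simp [hRank] <;> omega
  · intro u w p hp huw he
    -- u and w must both be `some (Sum.inl _)`
    obtain ⟨i, rfl⟩ : ∃ i, u = some (Sum.inl i) := by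
      match u, w with
      | none, none => exact absurd rfl huw
      | none, some (Sum.inl j) => simp [hRank] at he
      | none, some (Sum.inr j) => simp [hRank] at he
      | some (Sum.inl i), _ => exact ⟨i, rfl⟩
      | some (Sum.inr i), none => simp [hRank] at he
      | some (Sum.inr i), some (Sum.inl j) => simp [hRank] at he
      | some (Sum.inr i), some (Sum.inr j) =>
          simp [hRank] at he
          exact absurd (by rw [Fin.val_injective he]) huw
    obtain ⟨j, rfl⟩ : ∃ j, w = some (Sum.inl j) := by
      match w with
      | none => simp [hRank] at he
      | some (Sum.inl j) => exact ⟨j, rfl⟩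
      | some (Sum.inr j) => simp [hRank] at he
    cases p with
    | nil => exact absurd rfl huw
    | @cons _ x _ h q =>
      have hx : x = none ∨ x = some (Sum.inr i) := by
        rw [Hgraph, fromRel_adj] at h
        rcases h.2 with (⟨i', h1, h2⟩ | ⟨i', h1, h2⟩ | ⟨i' ,j', h1, h2⟩) |
          (⟨i', h1, h2⟩ | ⟨i', h1, h2⟩ | ⟨i', j', h1, h2⟩) <;> simp_all
      refine ⟨x, by simp [Walk.support_cons], fun hh => ?_, fun hh => ?_, ?_⟩
      · rw [Hgraph, fromRel_adj] at h; exact h.1 hh.symm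
      · rcases hx with rfl | rfl <;> simp_all
      · rcases hx with rfl | rfl <;> simp [hRank]

def scFun (n : ℕ) : Fin (n - 1) × Fin 2 → {x : Option (Fin (n - 1) ⊕ Fin (n - 1)) // x ≠ none} :=
  fun p => ⟨some (if p.2 = 0 then Sum.inl p.1 else Sum.inr p.1), by simp⟩

def scHom (n : ℕ) : KaK2 (n - 1) →g starClique (Hgraph n) none where
  toFun := scFun n
  map_rel' := by
    rintro ⟨u, i⟩ ⟨w, j⟩ h
    rw [KaK2, boxProd_adj] at h
    simp only [top_adj] at h
    rw [starClique, fromRel_adj]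
    simp only [scFun]
    constructor
    · simp only [ne_eq, Subtype.mk.injEq, Option.some.injEq]
      fin_cases i <;> fin_cases j <;> simp_all
    · have hadj_va : ∀ x : Fin (n-1), (Hgraph n).Adj none (some (Sum.inl x)) := by
        intro x
        rw [Hgraph, fromRel_adj]
        exact ⟨by simp, Or.inl (Or.inl ⟨x, rfl, rfl⟩)⟩
      have hadj_ab : ∀ x : Fin (n-1), (Hgraph n).Adj (some (Sum.inl x)) (some (Sum.inr x)) := by
        intro x
        rw [Hgraph, fromRel_adj]
        exact ⟨by simp, Or.inl (Or.inr (Or.inl ⟨x, rfl, rfl⟩))⟩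
      have hadj_bb : ∀ x y : Fin (n-1), x ≠ y →
          (Hgraph n).Adj (some (Sum.inr x)) (some (Sum.inr y)) := by
        intro x y hxy
        rw [Hgraph, fromRel_adj]
        exact ⟨by simp [hxy], Or.inl (Or.inr (Or.inr ⟨x, y, rfl, rfl⟩))⟩
      rcases h with ⟨huw, rfl⟩ | ⟨hij, rfl⟩
      · fin_cases i <;> simp only
        · exact Or.inl (Or.inr ⟨hadj_va u, hadj_va w⟩)
        · exact Or.inl (Or.inl (hadj_bb u w huw))
      · fin_cases i <;> fin_cases j <;> simp only [ite_true, ite_false] <;>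
          first
          | exact absurd rfl hij
          | exact Or.inl (Or.inl (hadj_ab u))
          | exact Or.inr (Or.inl (hadj_ab u))
          | (exfalso; exact hij rfl)

lemma scHom_inj (n : ℕ) : Function.Injective (scHom n) := by
  show Function.Injective (scFun n)
  rintro ⟨u, i⟩ ⟨w, j⟩ h
  have h' : (scFun n (u, i)).val = (scFun n (w, j)).val := congrArg Subtype.val h
  fin_cases i <;> fin_cases j <;> simp [scFun] at h' <;> simp [h']

/-- For `n ≥ 4`, the tree-depth of `K_{n-1} □ K_2` is at least `n + 1`; consequently, the
star-clique transform of `H_n` at `v` does not have smaller tree-depth than `H_n`. -/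
theorem treedepth_KaK2_ge_and_starClique (n : ℕ) (hn : 4 ≤ n) :
    n + 1 ≤ treedepth (KaK2 (n - 1)) ∧
      ¬ treedepth (starClique (Hgraph n) none) < treedepth (Hgraph n) := by
  have ha : 3 ≤ n - 1 := by omega
  have instF : Fintype {x : Option (Fin (n - 1) ⊕ Fin (n - 1)) // x ≠ none} := inferInstance
  have h1 : n + 1 ≤ treedepth (KaK2 (n - 1)) := by
    have hne : {k | ∃ f, IsRanking (KaK2 (n - 1)) k f}.Nonempty :=
      ⟨_, exists_ranking (KaK2 (n - 1))⟩
    obtain ⟨f, hf⟩ := Nat.sInf_mem hne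
    have := kak2_rank_lower ha hf
    unfold treedepth
    omega
  refine ⟨h1, ?_⟩
  have h2 : treedepth (Hgraph n) ≤ n + 1 :=
    Nat.sInf_le ⟨hRank n, hRank_ranking n hn⟩
  have h3 : n + 1 ≤ treedepth (starClique (Hgraph n) none) := by
    have hne : {k | ∃ f, IsRanking (starClique (Hgraph n) none) k f}.Nonempty :=
      ⟨_, exists_ranking (starClique (Hgraph n) none)⟩
    obtain ⟨f, hf⟩ := Nat.sInf_mem hne
    have := kak2_rank_lower ha (ranking_comp (scHom n) (scHom_inj n) hf)
    unfold treedepth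
    omega
  omega
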